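/- For every function δ₀ : ℝ → ℝ mapping (0,2] into (0,1] there exists a constant r₁ with 0 ≤ r₁ < 1 such that: for every real Banach space E for which δ₀ is a modulus of uniform convexity, every triple U, V, W of invertible linear isometries of E satisfying the Heisenberg relations, every n ∈ ℕ with n ≥ 2, all a₀, b₀ ∈ ℕ (including 0), and every ξ ∈ E, one has ‖ X_{a₀} ∘ (∏_{b=0}^{n−1} Y_{b₀+b}) ∘ (I − Z_{a₀+b₀}) ξ ‖ ≤ max{ r₁·‖(I − Z_{a₀+b₀})ξ‖, (1/2)^{n−2}·‖ξ‖ } (the operators Y_{b₀+b} commute with one another, so the product is well-defined). -/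

import Mathlib

/-- `δ : ℝ → ℝ` is a *modulus of uniform convexity* for `E`: it maps `(0,2]` into `(0,1]` and
for every `ε ∈ (0,2]` and all unit vectors `ξ, η` with `‖ξ - η‖ ≥ ε` one has
`‖(ξ + η)/2‖ ≤ 1 - δ ε`. -/
def IsUCModulus (E : Type*) [NormedAddCommGroup E] [NormedSpace ℝ E] (δ : ℝ → ℝ) : Prop :=
  (∀ ε : ℝ, 0 < ε → ε ≤ 2 → 0 < δ ε ∧ δ ε ≤ 1) ∧
    ∀ ε : ℝ, 0 < ε → ε ≤ 2 → ∀ ξ η : E, ‖ξ‖ = 1 → ‖η‖ = 1 → ε ≤ ‖ξ - η‖ →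
      ‖(2⁻¹ : ℝ) • (ξ + η)‖ ≤ 1 - δ ε

/-- `U, V, W` satisfy the Heisenberg relations `W = U⁻¹V⁻¹UV`, `UW = WU`, `VW = WV`
(the multiplication on `E ≃ₗᵢ[ℝ] E` is composition, `(e₁ * e₂) x = e₁ (e₂ x)`). -/
def HeisenbergRel {E : Type*} [NormedAddCommGroup E] [NormedSpace ℝ E]
    (U V W : E ≃ₗᵢ[ℝ] E) : Prop :=
  W = U⁻¹ * V⁻¹ * U * V ∧ U * W = W * U ∧ V * W = W * V

/-- The bounded operator on `E` underlying an invertible linear isometry. -/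
noncomputable def isomCLM {E : Type*} [NormedAddCommGroup E] [NormedSpace ℝ E]
    (U : E ≃ₗᵢ[ℝ] E) : E →L[ℝ] E :=
  U.toLinearIsometry.toContinuousLinearMap

/-- The operator `X_k = (I + U^{2^k})/2`. -/
noncomputable def halfOp {E : Type*} [NormedAddCommGroup E] [NormedSpace ℝ E]
    (U : E ≃ₗᵢ[ℝ] E) (k : ℕ) : E →L[ℝ] E :=
  (2⁻¹ : ℝ) • (1 + isomCLM (U ^ 2 ^ k))

/-!
Put `u = U^{2^a₀}`, `v = V^{2^b₀}`, `w = W^{2^{a₀+b₀}}`, so that `u v^m = v^m u w^m`, let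
`ζ = (I - Z)ξ = (ξ - wξ)/2`, `N = 2^n`, and let `η` be the average of `v^i ζ` over `i < N`; the
left-hand side is `‖(η + uη)/2‖`. Take `r₁ = max (1 - δ₀(1/16)) (1/2)` and suppose the
left-hand side exceeds `r₁‖ζ‖`; then `‖ζ‖ < 2‖η‖`, and uniform convexity with `ε = 1/16` makes `η`
almost `u`-invariant, and, applied to the dyadic blocks of the average and `g = v^{N/2}`, makes every
orbit sum `∑_{i<m} v^i ζ` with `m < N` almost `g`-invariant, with an error linear in `m`. Since
`v^N = g²`, this makes `η` almost `v^m`-invariant for `m < N`, and the commutation relation turns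
this into almost `w^m`-invariance, with error at most `3/4 ‖η‖`. But `∑_{m<N} w^m η` is the
`v`-average of the telescoping sum `(ξ - w^N ξ)/2`, so `N‖η‖ ≤ ‖ξ‖ + 3/4 N‖η‖`.
-/

open Finset

theorem pow_mul_pow_eq_of_commutator {G : Type*} [Group G] {U V W : G}
    (hW : W = U⁻¹ * V⁻¹ * U * V) (hUW : Commute U W) (hVW : Commute V W) (p q : ℕ) :
    U ^ p * V ^ q = V ^ q * U ^ p * W ^ (p * q) := by
  have hconj_one : V⁻¹ * U * V = U * W := by rw [hW]; group
  have hconj (k : ℕ) : (V ^ k)⁻¹ * U * V ^ k = U * W ^ k := by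
    induction k with
    | zero => simp
    | succ k ih =>
      calc (V ^ (k + 1))⁻¹ * U * V ^ (k + 1) = V⁻¹ * ((V ^ k)⁻¹ * U * V ^ k) * V := by group
        _ = V⁻¹ * U * V * W ^ k := by simp only [ih, mul_assoc, ← (hVW.pow_right k).eq]
        _ = U * W ^ (k + 1) := by rw [hconj_one, pow_succ', mul_assoc]
  have hconj_pow : (V ^ q)⁻¹ * U ^ p * V ^ q = U ^ p * W ^ (p * q) := by
    rw [mul_comm p q, pow_mul, ← (hUW.pow_right q).mul_pow, ← hconj]
    simpa using (conj_pow (a := (V ^ q)⁻¹) (b := U) (i := p)).symm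
  rw [mul_assoc, ← hconj_pow]
  group

theorem Subadditive.le_mul_of_two_pow {f : ℕ → ℝ} (hf : Subadditive f) (h0 : f 0 ≤ 0)
    {c : ℝ} {n : ℕ} (hpow : ∀ j < n, f (2 ^ j) ≤ c * 2 ^ j) {m : ℕ} (hm : m < 2 ^ n) :
    f m ≤ c * m := by
  induction n generalizing m with
  | zero => simp_all
  | succ n ih =>
    have ih' : ∀ {k}, k < 2 ^ n → f k ≤ c * k := ih fun j hj => hpow j (by omega)
    rcases lt_or_ge m (2 ^ n) with hlt | hge
    · exact ih' hlt
    obtain ⟨k, rfl⟩ := Nat.exists_eq_add_of_le hge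
    have hk : k < 2 ^ n := by rw [pow_succ] at hm; omega
    calc f (2 ^ n + k) ≤ f (2 ^ n) + f k := hf _ _
      _ ≤ c * 2 ^ n + c * k := add_le_add (hpow n n.lt_succ_self) (ih' hk)
      _ = c * ↑(2 ^ n + k) := by push_cast; ring

section Isometries

variable {E : Type*} [NormedAddCommGroup E] [NormedSpace ℝ E]

noncomputable def orbitSum (v : E ≃ₗᵢ[ℝ] E) (m : ℕ) : E →L[ℝ] E :=
  ∑ i ∈ range m, ((v ^ i).toContinuousLinearEquiv : E →L[ℝ] E)

noncomputable def dyadicAvg (v : E ≃ₗᵢ[ℝ] E) (n : ℕ) : E →L[ℝ] E :=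
  ((2 : ℝ) ^ n)⁻¹ • orbitSum v (2 ^ n)

section OrbitSum

variable (v : E ≃ₗᵢ[ℝ] E)

theorem orbitSum_apply (m : ℕ) (x : E) : orbitSum v m x = ∑ i ∈ range m, (v ^ i) x := by
  simp [orbitSum]

theorem orbitSum_add (a b : ℕ) (x : E) :
    orbitSum v (a + b) x = orbitSum v a x + (v ^ a) (orbitSum v b x) := by
  simp only [orbitSum_apply, sum_range_add, map_sum, pow_add, LinearIsometryEquiv.coe_mul,
    Function.comp_apply]

theorem orbitSum_sub_pow_apply_comm (a b : ℕ) (x : E) :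
    orbitSum v a x - (v ^ b) (orbitSum v a x) = orbitSum v b x - (v ^ a) (orbitSum v b x) := by
  have h := (orbitSum_add v a b x).symm.trans (add_comm a b ▸ orbitSum_add v b a x)
  rw [sub_eq_sub_iff_add_eq_add, add_comm, ← h, add_comm]

theorem map_orbitSum {g : E ≃ₗᵢ[ℝ] E} (hg : Commute g v) (m : ℕ) (x : E) :
    g (orbitSum v m x) = orbitSum v m (g x) := by
  simp only [orbitSum_apply, map_sum]
  exact sum_congr rfl fun i _ => DFunLike.congr_fun (hg.pow_right i).eq x

theorem norm_orbitSum_le (m : ℕ) (x : E) : ‖orbitSum v m x‖ ≤ m * ‖x‖ := by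
  simpa [orbitSum_apply] using norm_sum_le (range m) fun i => (v ^ i) x

theorem orbitSum_two_mul (p : ℕ) (x : E) :
    orbitSum v (2 * p) x = orbitSum v p (x + (v ^ p) x) := by
  rw [two_mul, orbitSum_add, map_orbitSum v (Commute.self_pow v p).symm, map_add]

theorem norm_orbitSum_mul_le (k q : ℕ) (x : E) :
    ‖orbitSum v (k * q) x‖ ≤ k * ‖orbitSum v q x‖ := by
  induction k with
  | zero => simp [orbitSum]
  | succ k ih =>
    rw [add_mul, one_mul, orbitSum_add, Nat.cast_succ, add_mul, one_mul]
    exact (norm_add_le _ _).trans (by rw [LinearIsometryEquiv.norm_map]; linarith)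

theorem norm_orbitSum_two_mul_mul_le (k q : ℕ) (x : E) :
    ‖orbitSum v (2 * (k * q)) x‖ ≤ k * ‖orbitSum v q x + (v ^ (k * q)) (orbitSum v q x)‖ := by
  rw [orbitSum_two_mul, map_orbitSum v (Commute.self_pow v _).symm, ← map_add]
  exact norm_orbitSum_mul_le v k q _

theorem norm_dyadicAvg_le (n : ℕ) (x : E) : ‖dyadicAvg v n x‖ ≤ ‖x‖ := by
  rw [dyadicAvg, smul_apply, norm_smul, norm_inv, norm_pow, Real.norm_two,
    inv_mul_le_iff₀ (by positivity)]
  exact_mod_cast norm_orbitSum_le v (2 ^ n) x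

theorem map_dyadicAvg {g : E ≃ₗᵢ[ℝ] E} (hg : Commute g v) (n : ℕ) (x : E) :
    g (dyadicAvg v n x) = dyadicAvg v n (g x) := by
  rw [dyadicAvg, smul_apply, smul_apply, map_smul, map_orbitSum v hg]

end OrbitSum

theorem halfOp_apply (U : E ≃ₗᵢ[ℝ] E) (k : ℕ) (x : E) :
    halfOp U k x = (2⁻¹ : ℝ) • (x + (U ^ 2 ^ k) x) := rfl

theorem one_sub_halfOp_apply (U : E ≃ₗᵢ[ℝ] E) (k : ℕ) (x : E) :
    (1 - halfOp U k) x = (2⁻¹ : ℝ) • (x - (U ^ 2 ^ k) x) := by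
  rw [sub_apply, one_apply_eq_self, halfOp_apply]
  module

theorem prod_halfOp_eq_dyadicAvg (V : E ≃ₗᵢ[ℝ] E) (b₀ n : ℕ) :
    ((List.range n).map fun b => halfOp V (b₀ + b)).prod = dyadicAvg (V ^ 2 ^ b₀) n := by
  induction n with
  | zero => ext x; simp [dyadicAvg, orbitSum]
  | succ n ih =>
    ext x
    rw [List.range_succ, List.map_append, List.prod_append, List.map_singleton,
      List.prod_singleton, mul_apply_eq_comp, ih, halfOp_apply, pow_add, pow_mul,
      dyadicAvg, dyadicAvg, smul_apply, smul_apply, map_smul, ← orbitSum_two_mul, smul_smul,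
      ← mul_inv, ← pow_succ, ← pow_succ']

theorem norm_sub_apply_le_of_mul_eq {a b c : E ≃ₗᵢ[ℝ] E} (habc : a * b = b * a * c) (x : E) :
    ‖x - c x‖ ≤ 2 * ‖x - a x‖ + 2 * ‖x - b x‖ := by
  have hbac : ‖x - c x‖ = ‖b (a x) - a (b x)‖ := by
    rw [← (b * a).norm_map, map_sub]
    change ‖b (a x) - (b * a * c) x‖ = _
    rw [← habc]
    rfl
  have hsplit : b (a x) - a (b x) = (b (a x) - b x) + (b x - x) + (x - a x) + (a x - a (b x)) := by
    abel
  rw [hbac, hsplit, ← map_sub, ← map_sub]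
  refine norm_add₄_le.trans (le_of_eq ?_)
  rw [LinearIsometryEquiv.norm_map, LinearIsometryEquiv.norm_map, norm_sub_rev (a x),
    norm_sub_rev (b x), norm_sub_rev x (b x)]
  ring

theorem norm_sum_pow_apply_half_sub_le (w : E ≃ₗᵢ[ℝ] E) (N : ℕ) (ξ : E) :
    ‖∑ m ∈ range N, (w ^ m) ((2⁻¹ : ℝ) • (ξ - w ξ))‖ ≤ ‖ξ‖ := by
  have hstep (m : ℕ) : (w ^ m) (w ξ) = (w ^ (m + 1)) ξ := by rw [pow_succ]; rfl
  have htel : ∑ m ∈ range N, (w ^ m) ((2⁻¹ : ℝ) • (ξ - w ξ)) = (2⁻¹ : ℝ) • (ξ - (w ^ N) ξ) := by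
    simp only [map_smul, map_sub, hstep, ← smul_sum, sum_range_sub' (fun m => (w ^ m) ξ),
      pow_zero, LinearIsometryEquiv.coe_one, id]
  have hsub := norm_sub_le ξ ((w ^ N) ξ)
  rw [LinearIsometryEquiv.norm_map] at hsub
  rw [htel, norm_smul]
  norm_num
  linarith

end Isometries

theorem natCast_mul_norm_le_norm_sum_add {E : Type*} [SeminormedAddCommGroup E]
    [NormedSpace ℝ E] (N : ℕ) (η : E) (y : ℕ → E) :
    N * ‖η‖ ≤ ‖∑ m ∈ range N, y m‖ + ∑ m ∈ range N, ‖η - y m‖ := by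
  have h : (N : ℝ) • η = ∑ m ∈ range N, y m + ∑ m ∈ range N, (η - y m) := by
    rw [← sum_add_distrib, Nat.cast_smul_eq_nsmul]
    simp
  calc (N : ℝ) * ‖η‖ = ‖(N : ℝ) • η‖ := by rw [norm_smul, Real.norm_natCast]
    _ ≤ _ := by rw [h]; exact (norm_add_le _ _).trans (add_le_add_right (norm_sum_le _ _) _)

section UniformConvexity

variable {E : Type*} [NormedAddCommGroup E] [NormedSpace ℝ E] {δ : ℝ → ℝ} {ε : ℝ}

theorem IsUCModulus.norm_midpoint_le (hE : IsUCModulus E δ) (hε : 0 < ε) (hε2 : ε ≤ 2)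
    {x y : E} (hxy : ‖y‖ = ‖x‖) (hdist : ε * ‖x‖ ≤ ‖x - y‖) :
    ‖(2⁻¹ : ℝ) • (x + y)‖ ≤ (1 - δ ε) * ‖x‖ := by
  rcases eq_or_ne x 0 with rfl | hx
  · simp [norm_eq_zero.mp (hxy.trans norm_zero)]
  have hx' : 0 < ‖x‖ := norm_pos_iff.mpr hx
  have hunit (z : E) (hz : ‖z‖ = ‖x‖) : ‖‖x‖⁻¹ • z‖ = 1 := by
    rw [norm_smul, norm_inv, norm_norm, hz, inv_mul_cancel₀ hx'.ne']
  have h := hE.2 ε hε hε2 _ _ (hunit x rfl) (hunit y hxy) (by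
    rw [← smul_sub, norm_smul, norm_inv, norm_norm, le_inv_mul_iff₀ hx', mul_comm]
    exact hdist)
  rwa [← smul_add, smul_comm, norm_smul (‖x‖⁻¹), norm_inv, norm_norm, inv_mul_le_iff₀ hx',
    mul_comm] at h

theorem IsUCModulus.norm_sub_lt (hE : IsUCModulus E δ) (hε : 0 < ε) (hε2 : ε ≤ 2)
    {R : ℝ} {x y : E} (hxy : ‖y‖ = ‖x‖) (hxR : ‖x‖ ≤ R)
    (hmid : (1 - δ ε) * R < ‖(2⁻¹ : ℝ) • (x + y)‖) : ‖x - y‖ < ε * R := by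
  by_contra! hdist
  have hδ : 0 ≤ 1 - δ ε := sub_nonneg.mpr (hE.1 ε hε hε2).2
  have := hE.norm_midpoint_le hε hε2 hxy ((mul_le_mul_of_nonneg_left hxR hε.le).trans hdist)
  nlinarith [mul_le_mul_of_nonneg_left hxR hδ]

variable (hE : IsUCModulus E δ) (hε : 0 < ε) (hε2 : ε ≤ 2) (v : E ≃ₗᵢ[ℝ] E)
include hE hε hε2

theorem norm_orbitSum_sub_pow_apply_le {n j : ℕ} (hj : j < n) (ζ : E)
    (hlarge : (1 - δ ε) * ‖ζ‖ < ‖dyadicAvg v n ζ‖) :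
    ‖orbitSum v (2 ^ j) ζ - (v ^ 2 ^ (n - 1)) (orbitSum v (2 ^ j) ζ)‖ ≤ ε * ‖ζ‖ * 2 ^ j := by
  set x := orbitSum v (2 ^ j) ζ
  set g := v ^ 2 ^ (n - 1)
  have hpow : 2 ^ (n - 1) = 2 ^ (n - 1 - j) * 2 ^ j := (pow_sub_mul_pow 2 (by omega)).symm
  have hN : 2 ^ n = 2 * 2 ^ (n - 1) := by rw [← pow_succ', Nat.sub_add_cancel (by omega)]
  -- the average over `2^n` terms is an average of `v`-translates of the midpoint of `x` and `g x`
  have hmid : 2 ^ j * ‖dyadicAvg v n ζ‖ ≤ ‖(2⁻¹ : ℝ) • (x + g x)‖ := by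
    have h := norm_orbitSum_two_mul_mul_le v (2 ^ (n - 1 - j)) (2 ^ j) ζ
    rw [← hpow, ← hN] at h
    have hN' : (2 : ℝ) ^ n = 2 * (2 ^ (n - 1 - j) * 2 ^ j) := by exact_mod_cast hpow ▸ hN
    rw [dyadicAvg, smul_apply, norm_smul, norm_smul, norm_inv, norm_inv, Real.norm_two, norm_pow,
      Real.norm_two, hN']
    push_cast at h
    field_simp
    linarith
  have hxR : ‖x‖ ≤ 2 ^ j * ‖ζ‖ := by exact_mod_cast norm_orbitSum_le v (2 ^ j) ζ
  have := hE.norm_sub_lt hε hε2 (g.norm_map x) hxR (by nlinarith [pow_pos (two_pos (α := ℝ)) j])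
  linarith

theorem norm_dyadicAvg_sub_pow_apply_le {n : ℕ} (hn : n ≠ 0) (ζ : E)
    (hlarge : (1 - δ ε) * ‖ζ‖ < ‖dyadicAvg v n ζ‖) {m : ℕ} (hm : m < 2 ^ n) :
    ‖dyadicAvg v n ζ - (v ^ m) (dyadicAvg v n ζ)‖ ≤ 2 * ε * ‖ζ‖ := by
  set g := v ^ 2 ^ (n - 1)
  set f : ℕ → ℝ := fun m => ‖orbitSum v m ζ - g (orbitSum v m ζ)‖
  have hsub : Subadditive f := fun a b => by
    have hcomm : g ((v ^ a) (orbitSum v b ζ)) = (v ^ a) (g (orbitSum v b ζ)) :=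
      DFunLike.congr_fun (Commute.pow_pow_self v _ _).eq _
    simp only [f, orbitSum_add, map_add]
    rw [hcomm, add_sub_add_comm, ← map_sub, ← (v ^ a).norm_map (orbitSum v b ζ - _)]
    exact norm_add_le _ _
  have hwin : f m ≤ ε * ‖ζ‖ * m :=
    hsub.le_mul_of_two_pow (by simp [f, orbitSum])
      (fun j hj => norm_orbitSum_sub_pow_apply_le hE hε hε2 v hj ζ hlarge) hm
  have hgg : v ^ 2 ^ n = g * g := by
    rw [← pow_add, ← two_mul, ← pow_succ', Nat.sub_add_cancel (Nat.one_le_iff_ne_zero.mpr hn)]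
  have hshift : ‖orbitSum v (2 ^ n) ζ - (v ^ m) (orbitSum v (2 ^ n) ζ)‖ ≤ 2 * f m := by
    rw [orbitSum_sub_pow_apply_comm, hgg]
    set y := orbitSum v m ζ
    calc ‖y - g (g y)‖ ≤ ‖y - g y‖ + ‖g y - g (g y)‖ := norm_sub_le_norm_sub_add_norm_sub _ _ _
      _ = 2 * f m := by rw [← map_sub, g.norm_map]; ring
  have hm' : (m : ℝ) ≤ 2 ^ n := by exact_mod_cast hm.le
  rw [dyadicAvg, smul_apply, map_smul, ← smul_sub, norm_smul, norm_inv, norm_pow, Real.norm_two,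
    inv_mul_le_iff₀ (by positivity)]
  calc _ ≤ 2 * (ε * ‖ζ‖ * m) := hshift.trans (by linarith)
    _ ≤ 2 ^ n * (2 * ε * ‖ζ‖) := by nlinarith [mul_nonneg hε.le (norm_nonneg ζ)]

end UniformConvexity

theorem norm_midpoint_dyadicAvg_le {E : Type*} [NormedAddCommGroup E] [NormedSpace ℝ E]
    {δ : ℝ → ℝ} (hE : IsUCModulus E δ) {u v w : E ≃ₗᵢ[ℝ] E}
    (huvw : ∀ m : ℕ, u * v ^ m = v ^ m * u * w ^ m) (hvw : Commute v w) {n : ℕ} (hn : n ≠ 0)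
    {ξ ζ : E} (hζ : ζ = (2⁻¹ : ℝ) • (ξ - w ξ)) :
    ‖(2⁻¹ : ℝ) • (dyadicAvg v n ζ + u (dyadicAvg v n ζ))‖ ≤
      max (max (1 - δ (1 / 16)) 2⁻¹ * ‖ζ‖) (4 / 2 ^ n * ‖ξ‖) := by
  set η := dyadicAvg v n ζ
  have hmid_le : ‖(2⁻¹ : ℝ) • (η + u η)‖ ≤ ‖η‖ := by
    rw [norm_smul, Real.norm_of_nonneg (by norm_num)]
    linarith [norm_add_le η (u η), u.norm_map η]
  refine le_max_iff.mpr (or_iff_not_imp_left.mpr fun hlarge => ?_)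
  rw [not_le, max_mul_of_nonneg _ _ (norm_nonneg ζ), max_lt_iff] at hlarge
  have hζη : ‖ζ‖ ≤ 2 * ‖η‖ := by linarith
  have hu : ‖η - u η‖ < 1 / 16 * ‖ζ‖ :=
    hE.norm_sub_lt (by norm_num) (by norm_num) (u.norm_map η) (norm_dyadicAvg_le v n ζ) hlarge.1
  have hw : ∀ m ∈ range (2 ^ n), ‖η - (w ^ m) η‖ ≤ 3 / 4 * ‖η‖ := fun m hm => by
    have hv := norm_dyadicAvg_sub_pow_apply_le hE (ε := 1 / 16) (by norm_num) (by norm_num) v hn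
      ζ (hlarge.1.trans_le hmid_le) (mem_range.mp hm)
    linarith [norm_sub_apply_le_of_mul_eq (huvw m) η]
  have hbudget : ‖∑ m ∈ range (2 ^ n), (w ^ m) η‖ ≤ ‖ξ‖ := by
    simp only [η, map_dyadicAvg v (hvw.symm.pow_left _), ← map_sum, hζ]
    exact (norm_dyadicAvg_le v n _).trans (norm_sum_pow_apply_half_sub_le w _ ξ)
  have hsum := natCast_mul_norm_le_norm_sum_add (2 ^ n) η fun m => (w ^ m) η
  have hsum_w := sum_le_sum hw
  simp only [sum_const, card_range, nsmul_eq_mul] at hsum_w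
  push_cast at hsum hsum_w
  have hη : 2 ^ n * ‖η‖ ≤ 4 * ‖ξ‖ := by linarith
  rw [div_mul_eq_mul_div, le_div_iff₀ (by positivity)]
  nlinarith [pow_pos (two_pos (α := ℝ)) n]

theorem heisenberg_shifted_inequality.{u}
    (δ₀ : ℝ → ℝ) (hδ₀ : ∀ ε : ℝ, 0 < ε → ε ≤ 2 → 0 < δ₀ ε ∧ δ₀ ε ≤ 1) :
    ∃ r₁ : ℝ, 0 ≤ r₁ ∧ r₁ < 1 ∧
      ∀ (E : Type u) [NormedAddCommGroup E] [NormedSpace ℝ E] [CompleteSpace E],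
        IsUCModulus E δ₀ →
          ∀ U V W : E ≃ₗᵢ[ℝ] E, HeisenbergRel U V W →
            ∀ n : ℕ, 2 ≤ n → ∀ a₀ b₀ : ℕ, ∀ ξ : E,
              ‖(halfOp U a₀ * ((List.range n).map fun b => halfOp V (b₀ + b)).prod *
                  (1 - halfOp W (a₀ + b₀))) ξ‖ ≤
                max (r₁ * ‖(1 - halfOp W (a₀ + b₀)) ξ‖) ((2⁻¹ : ℝ) ^ (n - 2) * ‖ξ‖) := by
  have hδ := (hδ₀ (1 / 16) (by norm_num) (by norm_num)).1
  refine ⟨max (1 - δ₀ (1 / 16)) 2⁻¹, le_max_of_le_right (by norm_num),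
    max_lt (by linarith) (by norm_num), ?_⟩
  intro E _ _ _ hE U V W ⟨hW, hUW, hVW⟩ n hn a₀ b₀ ξ
  have huvw (m : ℕ) : U ^ 2 ^ a₀ * (V ^ 2 ^ b₀) ^ m =
      (V ^ 2 ^ b₀) ^ m * U ^ 2 ^ a₀ * (W ^ 2 ^ (a₀ + b₀)) ^ m := by
    rw [← pow_mul, ← pow_mul, pow_add, Nat.mul_assoc]
    exact pow_mul_pow_eq_of_commutator hW hUW hVW _ _
  have hpow : (4 : ℝ) / 2 ^ n = 2⁻¹ ^ (n - 2) := by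
    rw [inv_pow, ← pow_sub_mul_pow (2 : ℝ) hn]
    field_simp
    norm_num
  rw [mul_apply_eq_comp, mul_apply_eq_comp, prod_halfOp_eq_dyadicAvg, halfOp_apply, ← hpow]
  exact norm_midpoint_dyadicAvg_le hE huvw ((show Commute V W from hVW).pow_pow _ _) (by omega)
    (one_sub_halfOp_apply W _ ξ)
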